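/- Let (Ω, P) be a finite probability space, let V be a finite set partitioned into nonempty disjoint blocks V_1,…,V_c, and let (X_i)_{i∈V} be random variables on Ω taking values in {−1, 1}. Then for every integer L ≥ 2 there exists an integer t with 0 ≤ t ≤ L−1 such that E_{j_1,…,j_t}E_{i_1,…,i_t}[ Σ_{j,j'∈[c]} E_{i∈V_j, i'∈V_{j'}} I(X_i; X_{i'} | X_{i_1},…,X_{i_t}) ] ≤ c²/L, where j_1,…,j_t are drawn independently and uniformly from [c], each i_s is drawn uniformly from V_{j_s}, i is uniform in V_j and i' is uniform in V_{j'}, and I denotes conditional mutual information measured in bits. (Lemma 4.1, blockwise correlation reduction by conditioning.) -/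

import Mathlib

open Finset
open scoped Classical

/-- Probability of an event `E` on a finite space with probability mass function `P`. -/
noncomputable def pr {Ω : Type*} [Fintype Ω] (P : Ω → ℝ) (E : Ω → Prop) : ℝ :=
  ∑ ω, if E ω then P ω else 0

/-- `-(p·log₂ p)`, the summand of Shannon entropy in bits (with the `0·log 0 = 0`
convention, since `Real.logb 2 0 = 0`). -/
noncomputable def entAux (p : ℝ) : ℝ := -(p * Real.logb 2 p)

/-- Conditional Shannon entropy in bits: `H(X | Z) = Σ_z P(Z = z) · H(X | Z = z)`. -/
noncomputable def condEnt {Ω α β : Type*} [Fintype Ω] (P : Ω → ℝ)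
    (X : Ω → α) (Z : Ω → β) : ℝ :=
  ∑ z ∈ Finset.univ.image Z,
    pr P (fun ω => Z ω = z) *
      ∑ x ∈ Finset.univ.image X,
        entAux (pr P (fun ω => X ω = x ∧ Z ω = z) / pr P (fun ω => Z ω = z))

/-- Conditional mutual information in bits: `I(X; Y | Z) = H(X | Z) - H(X | Y, Z)`. -/
noncomputable def condMI {Ω α β γ : Type*} [Fintype Ω] (P : Ω → ℝ)
    (X : Ω → α) (Y : Ω → β) (Z : Ω → γ) : ℝ :=
  condEnt P X Z - condEnt P X (fun ω => (Y ω, Z ω))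


/-!
Let `Φ t` be the expectation, over `t` random conditioning vertices, of the block sum of the
average entropies `H(X_i | X_{i_1}, …, X_{i_t})`. Averaging
`I(X_i; X_{i'} | Z) = H(X_i | Z) - H(X_i | X_{i'}, Z)` over `i'` turns `i'` into one more
conditioning sample, so the `t`-th quantity of the theorem is `c (Φ t - Φ (t + 1))`. Over
`t < L` these telescope to `c (Φ 0 - Φ L) ≤ c²`, as entropies of `±1`-valued variables lie in
`[0, 1]`; hence the smallest of the `L` terms is at most `c² / L`.
-/

section Entropy

variable {Ω : Type*} [Fintype Ω] {P : Ω → ℝ}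

lemma pr_nonneg (hP0 : ∀ ω, 0 ≤ P ω) (E : Ω → Prop) : 0 ≤ pr P E :=
  sum_nonneg fun ω _ => by split_ifs <;> simp [hP0 ω]

lemma pr_mono (hP0 : ∀ ω, 0 ≤ P ω) {E F : Ω → Prop} (h : ∀ ω, E ω → F ω) :
    pr P E ≤ pr P F :=
  sum_le_sum fun ω _ => by
    by_cases hE : E ω
    · simp [hE, h ω hE]
    · by_cases hF : F ω <;> simp [hE, hF, hP0 ω]

lemma sum_pr_and {α : Type*} {s : Finset α} {X : Ω → α} (hX : ∀ ω, X ω ∈ s)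
    (E : Ω → Prop) : ∑ x ∈ s, pr P (fun ω => X ω = x ∧ E ω) = pr P E := by
  unfold pr
  rw [sum_comm]
  refine sum_congr rfl fun ω _ => ?_
  by_cases hE : E ω <;> simp [hE, hX ω]

lemma sum_pr_image_eq_one (hP1 : ∑ ω, P ω = 1) {β : Type*} (Z : Ω → β) :
    ∑ z ∈ univ.image Z, pr P (fun ω => Z ω = z) = 1 := by
  simpa [pr, hP1] using sum_pr_and (P := P) (s := univ.image Z) (by simp) (fun _ => True)

lemma entAux_nonneg {p : ℝ} (h0 : 0 ≤ p) (h1 : p ≤ 1) : 0 ≤ entAux p :=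
  neg_nonneg.2 (mul_nonpos_of_nonneg_of_nonpos h0 (Real.logb_nonpos one_lt_two h0 h1))

lemma entAux_add_entAux_one_sub (p : ℝ) :
    entAux p + entAux (1 - p) = Real.binEntropy p / Real.log 2 := by
  simp only [entAux, Real.logb, Real.binEntropy, Real.log_inv]
  ring

lemma sum_entAux_pair_le_one {α : Type*} {a b : α} {f : α → ℝ}
    (hf1 : ∑ x ∈ {a, b}, f x = 1) : ∑ x ∈ {a, b}, entAux (f x) ≤ 1 := by
  by_cases hab : a = b
  · subst hab
    simp_all [entAux]
  · rw [sum_pair hab] at hf1 ⊢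
    rw [← sub_eq_of_eq_add' hf1.symm, entAux_add_entAux_one_sub,
      div_le_one (Real.log_pos one_lt_two)]
    exact Real.binEntropy_le_log_two

lemma condEnt_nonneg {α β : Type*} (hP0 : ∀ ω, 0 ≤ P ω) (X : Ω → α) (Z : Ω → β) :
    0 ≤ condEnt P X Z :=
  sum_nonneg fun _ _ => mul_nonneg (pr_nonneg hP0 _) <| sum_nonneg fun _ _ =>
    entAux_nonneg (div_nonneg (pr_nonneg hP0 _) (pr_nonneg hP0 _))
      (div_le_one_of_le₀ (pr_mono hP0 fun _ h => h.2) (pr_nonneg hP0 _))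

lemma condEnt_le_one {α β : Type*} (hP0 : ∀ ω, 0 ≤ P ω) (hP1 : ∑ ω, P ω = 1)
    {X : Ω → α} {a b : α} (hX : ∀ ω, X ω = a ∨ X ω = b) (Z : Ω → β) :
    condEnt P X Z ≤ 1 := by
  have hXab : ∀ ω, X ω ∈ ({a, b} : Finset α) := by simpa using hX
  -- values outside the range of `X` contribute `entAux 0 = 0`
  have hpair : ∀ z, ∑ x ∈ univ.image X,
      entAux (pr P (fun ω => X ω = x ∧ Z ω = z) / pr P (fun ω => Z ω = z)) =
      ∑ x ∈ {a, b}, entAux (pr P (fun ω => X ω = x ∧ Z ω = z) / pr P (fun ω => Z ω = z)) := by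
    refine fun z => sum_subset (by simpa [subset_iff] using hXab) fun x _ hx => ?_
    have : pr P (fun ω => X ω = x ∧ Z ω = z) = 0 :=
      sum_eq_zero fun ω _ => if_neg fun h => hx (mem_image.2 ⟨ω, mem_univ _, h.1⟩)
    simp [this, entAux]
  calc condEnt P X Z ≤ ∑ z ∈ univ.image Z, pr P (fun ω => Z ω = z) := by
        refine sum_le_sum fun z _ => ?_
        rw [hpair]
        rcases (pr_nonneg hP0 fun ω => Z ω = z).eq_or_lt with hq | hq
        · simp [← hq]
        · refine mul_le_of_le_one_right hq.le <| sum_entAux_pair_le_one ?_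
          rw [← sum_div, sum_pr_and hXab, div_self hq.ne']
    _ = 1 := sum_pr_image_eq_one hP1 Z

lemma condEnt_comp_injective {α β γ : Type*} (X : Ω → α) (Z : Ω → β) {e : β → γ}
    (he : e.Injective) : condEnt P X (fun ω => e (Z ω)) = condEnt P X Z := by
  unfold condEnt
  rw [show univ.image (fun ω => e (Z ω)) = (univ.image Z).image e by rw [image_image]; rfl,
    sum_image fun _ _ _ _ h => he h]
  simp only [he.eq_iff]

end Entropy

section Sampling

variable {V : Type*}

/-- `card ι` times the expectation of `g` at a vertex drawn from a uniform block, then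
uniformly within it. -/
noncomputable def blockAvg {ι : Type*} [Fintype ι] (B : ι → Finset V) (g : V → ℝ) : ℝ :=
  ∑ a, (1 / ((B a).card : ℝ)) * ∑ i ∈ B a, g i

/-- Expectation of `f` at `t` independent such vertices. -/
noncomputable def sampleAvg {c : ℕ} (B : Fin c → Finset V) (t : ℕ) (f : (Fin t → V) → ℝ) :
    ℝ :=
  (1 / (c : ℝ) ^ t) *
    ∑ j : Fin t → Fin c,
      (∏ s, (1 : ℝ) / ((B (j s)).card : ℝ)) * ∑ v ∈ Fintype.piFinset (fun s => B (j s)), f v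

section blockAvg

variable {ι κ : Type*} [Fintype ι] [Fintype κ] (B : ι → Finset V)

lemma blockAvg_eq_sum_sigma (g : V → ℝ) :
    blockAvg B g = ∑ p ∈ univ.sigma B, g p.2 / (B p.1).card := by
  simp only [blockAvg, sum_sigma, mul_sum, div_eq_inv_mul, mul_one]

lemma blockAvg_nonneg {g : V → ℝ} (hg : ∀ i, 0 ≤ g i) : 0 ≤ blockAvg B g :=
  sum_nonneg fun _ _ => mul_nonneg (by positivity) (sum_nonneg fun i _ => hg i)

lemma blockAvg_mono {f g : V → ℝ} (h : ∀ i, f i ≤ g i) : blockAvg B f ≤ blockAvg B g :=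
  sum_le_sum fun _ _ => mul_le_mul_of_nonneg_left (sum_le_sum fun i _ => h i) (by positivity)

lemma blockAvg_const (hB : ∀ a, (B a).Nonempty) (k : ℝ) :
    blockAvg B (fun _ => k) = Fintype.card ι * k := by
  simp [blockAvg, (hB _).card_pos.ne']

lemma blockAvg_sub (f g : V → ℝ) :
    blockAvg B (fun i => f i - g i) = blockAvg B f - blockAvg B g := by
  simp only [blockAvg, sum_sub_distrib, mul_sub]

lemma blockAvg_const_mul (k : ℝ) (g : V → ℝ) :
    blockAvg B (fun i => k * g i) = k * blockAvg B g := by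
  simp only [blockAvg, mul_sum]
  exact sum_congr rfl fun _ _ => sum_congr rfl fun _ _ => by ring

lemma blockAvg_comm {W : Type*} (B' : κ → Finset W) (F : V → W → ℝ) :
    blockAvg B (fun i => blockAvg B' (F i)) = blockAvg B' (fun i' => blockAvg B (F · i')) := by
  simp only [blockAvg_eq_sum_sigma, sum_div]
  rw [sum_comm]
  exact sum_congr rfl fun _ _ => sum_congr rfl fun _ _ => div_right_comm _ _ _

lemma blockAvg_blockAvg {W : Type*} (B' : κ → Finset W) (F : V → W → ℝ) :
    blockAvg B (fun i => blockAvg B' (F i)) =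
      ∑ a, ∑ b, (1 / ((B a).card : ℝ)) * (1 / ((B' b).card : ℝ)) *
        ∑ i ∈ B a, ∑ i' ∈ B' b, F i i' := by
  simp only [blockAvg, mul_sum]
  refine sum_congr rfl fun a _ => ?_
  rw [sum_comm]
  exact sum_congr rfl fun _ _ => sum_congr rfl fun _ _ => sum_congr rfl fun _ _ => by ring

end blockAvg

section sampleAvg

variable {c : ℕ} (B : Fin c → Finset V)

lemma sampleAvg_nonneg {t : ℕ} {f : (Fin t → V) → ℝ} (hf : ∀ v, 0 ≤ f v) :
    0 ≤ sampleAvg B t f :=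
  mul_nonneg (by positivity) <| sum_nonneg fun _ _ =>
    mul_nonneg (prod_nonneg fun _ _ => by positivity) (sum_nonneg fun v _ => hf v)

lemma sampleAvg_zero (f : (Fin 0 → V) → ℝ) : sampleAvg B 0 f = f ![] := by
  simp [sampleAvg, Subsingleton.elim default ![]]

lemma sampleAvg_sub {t : ℕ} (f g : (Fin t → V) → ℝ) :
    sampleAvg B t (fun v => f v - g v) = sampleAvg B t f - sampleAvg B t g := by
  simp only [sampleAvg, sum_sub_distrib, mul_sub]

lemma sampleAvg_const_mul {t : ℕ} (k : ℝ) (f : (Fin t → V) → ℝ) :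
    sampleAvg B t (fun v => k * f v) = k * sampleAvg B t f := by
  simp only [sampleAvg, mul_sum]
  exact sum_congr rfl fun _ _ => sum_congr rfl fun _ _ => by ring

lemma sampleAvg_sum {κ : Type*} (S : Finset κ) {t : ℕ} (f : κ → (Fin t → V) → ℝ) :
    sampleAvg B t (fun v => ∑ k ∈ S, f k v) = ∑ k ∈ S, sampleAvg B t (f k) := by
  simp only [sampleAvg, mul_sum]
  rw [sum_comm (s := S)]
  refine sum_congr rfl fun j _ => ?_
  rw [sum_comm]

lemma sampleAvg_blockAvg_comm {κ W : Type*} [Fintype κ] (B' : κ → Finset W) {t : ℕ}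
    (F : (Fin t → V) → W → ℝ) :
    sampleAvg B t (fun v => blockAvg B' (F v)) = blockAvg B' (fun i => sampleAvg B t (F · i)) := by
  simp only [blockAvg, sampleAvg_sum, sampleAvg_const_mul]

lemma sum_piFinset_succ {M : Type*} [AddCommMonoid M] {n : ℕ} (T : Fin (n + 1) → Finset V)
    (g : (Fin (n + 1) → V) → M) :
    ∑ v ∈ Fintype.piFinset T, g v =
      ∑ x ∈ T 0, ∑ v ∈ Fintype.piFinset (fun s => T s.succ), g (Fin.cons x v) := by
  have := filter_piFinset_eq_map_consEquiv T (fun _ => True)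
  simp only [filter_true] at this
  rw [this, sum_map, sum_product]
  rfl

lemma mul_sampleAvg_succ {t : ℕ} (f : (Fin (t + 1) → V) → ℝ) :
    c * sampleAvg B (t + 1) f = blockAvg B fun i => sampleAvg B t fun v => f (Fin.cons i v) := by
  obtain rfl | hc := eq_or_ne c 0
  · simp [blockAvg]
  have hw : (c : ℝ) * (1 / (c : ℝ) ^ (t + 1)) = 1 / (c : ℝ) ^ t := by
    field_simp
    ring
  rw [sampleAvg, ← mul_assoc, hw, ← (Fin.consEquiv fun _ => Fin c).sum_comp,
    Fintype.sum_prod_type]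
  simp only [Fin.consEquiv_apply, Fin.prod_univ_succ, Fin.cons_zero, Fin.cons_succ,
    sum_piFinset_succ, blockAvg, sampleAvg, mul_sum]
  refine sum_congr rfl fun a _ => ?_
  rw [sum_comm]
  exact sum_congr rfl fun _ _ => sum_congr rfl fun _ _ => sum_congr rfl fun _ _ => by ring

end sampleAvg

end Sampling

section Potential

variable {Ω V α : Type*} [Fintype Ω] (P : Ω → ℝ) {c : ℕ} (B : Fin c → Finset V) (X : V → Ω → α)

lemma condEnt_pair_eq_cons {β : Type*} (Y : Ω → β) (i : V) {t : ℕ} (v : Fin t → V) :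
    condEnt P Y (fun ω => (X i ω, fun s => X (v s) ω)) =
      condEnt P Y (fun ω (s : Fin (t + 1)) => X ((Fin.cons i v : Fin (t + 1) → V) s) ω) := by
  have hcons : (fun ω (s : Fin (t + 1)) => X ((Fin.cons i v : Fin (t + 1) → V) s) ω) =
      fun ω => Fin.consEquiv (fun _ => α) (X i ω, fun s => X (v s) ω) := by
    funext ω s
    cases s using Fin.cases <;> rfl
  rw [hcons, condEnt_comp_injective _ _ (Equiv.injective _)]

noncomputable def avgCondEnt (t : ℕ) : ℝ :=
  sampleAvg B t fun v => blockAvg B fun i => condEnt P (X i) fun ω s => X (v s) ω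

lemma sampleAvg_blockAvg_condMI (hB : ∀ a, (B a).Nonempty) (t : ℕ) :
    sampleAvg B t (fun v => blockAvg B fun i => blockAvg B fun i' =>
      condMI P (X i) (X i') fun ω s => X (v s) ω) =
      c * (avgCondEnt P B X t - avgCondEnt P B X (t + 1)) := by
  have hnext : sampleAvg B t (fun v => blockAvg B fun i => blockAvg B fun i' =>
      condEnt P (X i) fun ω => (X i' ω, fun s => X (v s) ω)) = c * avgCondEnt P B X (t + 1) := by
    rw [avgCondEnt, mul_sampleAvg_succ, ← sampleAvg_blockAvg_comm]
    congr 1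
    funext v
    rw [blockAvg_comm]
    simp only [condEnt_pair_eq_cons]
  simp only [condMI, blockAvg_sub, blockAvg_const B hB, Fintype.card_fin, blockAvg_const_mul,
    sampleAvg_sub, sampleAvg_const_mul, hnext, avgCondEnt, mul_sub]

lemma avgCondEnt_nonneg (hP0 : ∀ ω, 0 ≤ P ω) (t : ℕ) : 0 ≤ avgCondEnt P B X t :=
  sampleAvg_nonneg B fun _ => blockAvg_nonneg B fun _ => condEnt_nonneg hP0 _ _

lemma avgCondEnt_zero_le (hP0 : ∀ ω, 0 ≤ P ω) (hP1 : ∑ ω, P ω = 1)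
    (hB : ∀ a, (B a).Nonempty) {a b : α} (hX : ∀ i ω, X i ω = a ∨ X i ω = b) :
    avgCondEnt P B X 0 ≤ c := by
  rw [avgCondEnt, sampleAvg_zero]
  calc _ ≤ blockAvg B fun _ => 1 := blockAvg_mono B fun i => condEnt_le_one hP0 hP1 (hX i) _
    _ = c := by simp [blockAvg_const B hB]

end Potential

theorem blockwise_correlation_reduction_general {Ω V : Type*} [Fintype Ω]
    (P : Ω → ℝ) (hP0 : ∀ ω, 0 ≤ P ω) (hP1 : ∑ ω, P ω = 1)
    (c : ℕ) (Vb : Fin c → Finset V)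
    (hne : ∀ j, (Vb j).Nonempty)
    (X : V → Ω → ℤ) (hX : ∀ i ω, X i ω = 1 ∨ X i ω = -1)
    (L : ℕ) (hL : 2 ≤ L) :
    ∃ t ≤ L - 1,
      (1 / (c : ℝ) ^ t) *
        ∑ j : Fin t → Fin c,
          (∏ s, (1 : ℝ) / ((Vb (j s)).card : ℝ)) *
            ∑ v ∈ Fintype.piFinset (fun s => Vb (j s)),
              ∑ a : Fin c, ∑ b : Fin c,
                (1 / ((Vb a).card : ℝ)) * (1 / ((Vb b).card : ℝ)) *
                  ∑ i ∈ Vb a, ∑ i' ∈ Vb b,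
                    condMI P (X i) (X i') (fun ω => fun s : Fin t => X (v s) ω)
        ≤ (c : ℝ) ^ 2 / (L : ℝ) := by
  simp only [← blockAvg_blockAvg]
  set Φ := avgCondEnt P Vb X
  have hsum : ∑ t ∈ range L, c * (Φ t - Φ (t + 1)) ≤ ∑ _t ∈ range L, (c : ℝ) ^ 2 / L := by
    rw [← mul_sum, sum_range_sub', sum_const, card_range, nsmul_eq_mul,
      mul_div_cancel₀ _ (by positivity)]
    nlinarith [avgCondEnt_zero_le P Vb X hP0 hP1 hne hX, avgCondEnt_nonneg P Vb X hP0 L]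
  obtain ⟨t, ht, hle⟩ := exists_le_of_sum_le (nonempty_range_iff.2 (by omega)) hsum
  rw [← sampleAvg_blockAvg_condMI P Vb X hne] at hle
  exact ⟨t, Nat.le_sub_one_of_lt (mem_range.1 ht), hle⟩

/-- Lemma 4.1 (blockwise correlation reduction by conditioning): for `{−1,1}`-valued
random variables `(X_i)_{i ∈ V}` on a finite probability space, with `V` partitioned into
nonempty blocks `V_1, …, V_c`, for every `L ≥ 2` there is a `t ≤ L - 1` such that,
in expectation over `t` vertices `i_1, …, i_t` sampled by choosing uniform blocks
`j_1, …, j_t` and uniform vertices within them, the sum over block pairs `(j, j')` of the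
average conditional mutual information `I(X_i; X_{i'} | X_{i_1}, …, X_{i_t})`
(`i` uniform in `V_j`, `i'` uniform in `V_{j'}`) is at most `c²/L`. -/
theorem blockwise_correlation_reduction {Ω V : Type*} [Fintype Ω] [Fintype V]
    [DecidableEq V]
    (P : Ω → ℝ) (hP0 : ∀ ω, 0 ≤ P ω) (hP1 : ∑ ω, P ω = 1)
    (c : ℕ) (Vb : Fin c → Finset V)
    (hne : ∀ j, (Vb j).Nonempty)
    (hdisj : ∀ j j', j ≠ j' → Disjoint (Vb j) (Vb j'))
    (hcover : ∀ v : V, ∃ j, v ∈ Vb j)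
    (X : V → Ω → ℤ) (hX : ∀ i ω, X i ω = 1 ∨ X i ω = -1)
    (L : ℕ) (hL : 2 ≤ L) :
    ∃ t ≤ L - 1,
      (1 / (c : ℝ) ^ t) *
        ∑ j : Fin t → Fin c,
          (∏ s, (1 : ℝ) / ((Vb (j s)).card : ℝ)) *
            ∑ v ∈ Fintype.piFinset (fun s => Vb (j s)),
              ∑ a : Fin c, ∑ b : Fin c,
                (1 / ((Vb a).card : ℝ)) * (1 / ((Vb b).card : ℝ)) *
                  ∑ i ∈ Vb a, ∑ i' ∈ Vb b,
                    condMI P (X i) (X i') (fun ω => fun s : Fin t => X (v s) ω)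
        ≤ (c : ℝ) ^ 2 / (L : ℝ) :=
  blockwise_correlation_reduction_general P hP0 hP1 c Vb hne X hX L hL
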